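/- arXiv:1611.08340 — 2 statements merged into one kernel-verified Lean document; each statement's English description precedes it below -/
import Mathlib

section
/- Let V and W be finite-dimensional vector spaces over an algebraically closed field k of characteristic p > 0. Let A : V → W be a Frobenius-semilinear map (i.e. additive with A(λv) = λ^p A(v)) and B : V → W a k-linear surjective map. Then A - B : V → W is surjective as a map of abelian groups. -/
/-!
Reducing along a linear right inverse of `B`, it suffices to show that `A - id` is onto for a
Frobenius-semilinear `A : W → W`. Given `w`, the iterates `Aⁱ w` satisfy a relation
`Aⁿ⁺¹ w = ∑_{i ≤ n} aᵢ Aⁱ w`, and we look for a preimage `x = ∑_{i ≤ n} cᵢ Aⁱ w`. Comparing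
coefficients, `A x - x = w` follows from the scalar system `c₀ = a₀ cₙᵖ - 1`,
`cᵢ₊₁ = cᵢᵖ + aᵢ₊₁ cₙᵖ`. Solving it recursively expresses each `cᵢ` as a polynomial `Dᵢ`
(`cyclicSolutionPoly`) in `t = cₙ`, and `Dₙ(t) = t` is solvable since `Dₙ - X` has
derivative `-1`, hence is nonconstant.
-/

open Polynomial Finset

theorem Submodule.exists_succ_eq_sum_range_smul {R M : Type*} [Ring R] [AddCommGroup M]
    [Module R M] [IsNoetherian R M] (f : ℕ → M) :
    ∃ (n : ℕ) (a : ℕ → R), ∑ i ∈ range (n + 1), a i • f i = f (n + 1) := by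
  simp_rw [← mem_span_image_finset_iff_exists_fun']
  by_contra! h
  refine not_strictMono_of_wellFoundedGT (fun n ↦ span R (f '' ↑(range (n + 1)))) ?_
  refine strictMono_nat_of_lt_succ fun n ↦ lt_of_le_of_ne ?_ fun heq ↦ h n ?_
  · exact span_mono (Set.image_mono (by simp))
  · exact heq ▸ subset_span ⟨n + 1, by simp, rfl⟩

theorem Polynomial.derivative_pow_char {R : Type*} [CommSemiring R] (p : ℕ) [CharP R p]
    (q : R[X]) : derivative (q ^ p) = 0 := by
  simp [derivative_pow]

noncomputable def cyclicSolutionPoly {k : Type*} [Field k] (p : ℕ) (a : ℕ → k) : ℕ → k[X]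
  | 0 => C (a 0) * X ^ p - 1
  | i + 1 => cyclicSolutionPoly p a i ^ p + C (a (i + 1)) * X ^ p

theorem derivative_cyclicSolutionPoly {k : Type*} [Field k] (p : ℕ) [CharP k p] (a : ℕ → k)
    (i : ℕ) : derivative (cyclicSolutionPoly p a i) = 0 := by
  cases i <;> simp [cyclicSolutionPoly, derivative_pow_char]

theorem exists_cyclic_scalar_solution {k : Type*} [Field k] [IsAlgClosed k] (p : ℕ) [CharP k p]
    (a : ℕ → k) (n : ℕ) :
    ∃ c : ℕ → k, c 0 = a 0 * c n ^ p - 1 ∧ ∀ i, c (i + 1) = c i ^ p + a (i + 1) * c n ^ p := by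
  set D := cyclicSolutionPoly p a
  have hder : derivative (D n - X) = -1 := by
    simp [D, derivative_cyclicSolutionPoly]
  have hdeg : (D n - X).degree ≠ 0 := fun h ↦ by
    simp [derivative_of_natDegree_zero (natDegree_eq_zero_iff_degree_le_zero.2 h.le)] at hder
  obtain ⟨t, ht⟩ := IsAlgClosed.exists_root _ hdeg
  have hfix : (D n).eval t = t := by simpa [sub_eq_zero] using ht
  refine ⟨fun i ↦ (D i).eval t, ?_, fun i ↦ ?_⟩ <;>
    simp [D, cyclicSolutionPoly, hfix]

section Semilinear

variable {k W : Type*} [Field k] [AddCommGroup W] [Module k W] {p : ℕ}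
  {A : W →+ W} (hA : ∀ (c : k) (w : W), A (c • w) = c ^ p • A w)
include hA

theorem apply_sum_smul_iterate_sub_eq {w : W} {n : ℕ} {a c : ℕ → k}
    (hrel : ∑ i ∈ range (n + 1), a i • A^[i] w = A^[n + 1] w)
    (hc₀ : c 0 = a 0 * c n ^ p - 1) (hc : ∀ i, c (i + 1) = c i ^ p + a (i + 1) * c n ^ p) :
    A (∑ i ∈ range (n + 1), c i • A^[i] w) - ∑ i ∈ range (n + 1), c i • A^[i] w = w := by
  have hA_sum : A (∑ i ∈ range (n + 1), c i • A^[i] w)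
      = ∑ i ∈ range n, c i ^ p • A^[i + 1] w + c n ^ p • ∑ i ∈ range (n + 1), a i • A^[i] w := by
    rw [map_sum, sum_range_succ, hrel]
    simp only [hA, ← Function.iterate_succ_apply' (⇑A)]
  rw [hA_sum, smul_sum, sum_range_succ', sum_range_succ' (fun i ↦ c i • A^[i] w)]
  simp only [hc, hc₀, smul_smul, add_smul, sub_smul, Function.iterate_zero_apply, one_smul,
    sum_add_distrib]
  simp only [mul_comm]
  abel

theorem surjective_sub_self_of_frobenius_semilinear [IsAlgClosed k] [CharP k p]
    [FiniteDimensional k W] : Function.Surjective (fun w ↦ A w - w) := by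
  intro w
  obtain ⟨n, a, hrel⟩ := Submodule.exists_succ_eq_sum_range_smul (R := k) (A^[·] w)
  obtain ⟨c, hc₀, hc⟩ := exists_cyclic_scalar_solution p a n
  exact ⟨_, apply_sum_smul_iterate_sub_eq hA hrel hc₀ hc⟩

end Semilinear

theorem stmt0_general {k : Type*} [Field k] [IsAlgClosed k] {p : ℕ} [CharP k p]
    {V W : Type*} [AddCommGroup V] [AddCommGroup W] [Module k V] [Module k W]
    [FiniteDimensional k W]
    (A : V →+ W) (hA : ∀ (c : k) (v : V), A (c • v) = c ^ p • A v)
    (B : V →ₗ[k] W) (hB : Function.Surjective B) :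
    Function.Surjective (fun v => A v - B v) := by
  obtain ⟨s, hs⟩ := B.exists_rightInverse_of_surjective (LinearMap.range_eq_top.2 hB)
  have hAs : ∀ (c : k) (w : W), A.comp s.toAddMonoidHom (c • w) = c ^ p • A.comp s w := by
    simp [hA]
  have hBs : ∀ u, B (s u) = u := LinearMap.congr_fun hs
  intro w
  obtain ⟨u, rfl⟩ := surjective_sub_self_of_frobenius_semilinear hAs w
  exact ⟨s u, by simp [hBs]⟩

/-- Let `V` and `W` be finite-dimensional vector spaces over an algebraically
closed field `k` of characteristic `p > 0`.  Let `A : V → W` be a Frobenius-semilinear map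
(additive with `A (λ • v) = λ^p • A v`) and `B : V → W` a `k`-linear surjective map.
Then `A - B : V → W` is surjective as a map of abelian groups. -/
theorem stmt0 {k : Type*} [Field k] [IsAlgClosed k] {p : ℕ} (hp : p ≠ 0) [CharP k p]
    {V W : Type*} [AddCommGroup V] [AddCommGroup W] [Module k V] [Module k W]
    [FiniteDimensional k V] [FiniteDimensional k W]
    (A : V →+ W) (hA : ∀ (c : k) (v : V), A (c • v) = c ^ p • A v)
    (B : V →ₗ[k] W) (hB : Function.Surjective B) :
    Function.Surjective (fun v => A v - B v) :=
  stmt0_general A hA B hB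
end

section
/- Let M, N be finitely generated modules over a complete Noetherian local ring (R, m) of characteristic p over an algebraically closed residue field k, each with the m-adic filtration F_iM = m^i M, F_iN = m^i N. Let φ : M → N be an additive map of the form φ = A - B where B is R-linear with all graded pieces gr_i(B) surjective, and A satisfies A(F_iM) ⊆ F_{pi}N (so gr_i(A) = 0 for i > 0) and gr_0(A) is Frobenius-semilinear over k. Then φ is surjective. -/
/-!
Modulo `𝔪` the equation `A x - B x = n` becomes `Ā v - B̄ v = n̄` with `Ā` Frobenius-semilinear
and `B̄` linear and surjective between finite-dimensional vector spaces over the algebraically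
closed field `k`. Composing `Ā` with a linear section of `B̄` reduces it to Lang's equation
`F u - u = w`: the iterates `Fʲ w` satisfy a linear recurrence, and looking for `u` in their span
leads to a fixed point of a one-variable polynomial whose linear coefficient is `-1`, which exists
because `k` is algebraically closed. In positive degree `A` raises the filtration degree, so there
`A - B` is surjective on graded pieces because `B` is; by completeness, a solution is obtained as
the limit of successive approximations.
-/

open IsLocalRing Polynomial Finset

theorem Polynomial.coeff_one_pow_char {R : Type*} [CommSemiring R] {p : ℕ} [Fact p.Prime]
    [CharP R p] (f : R[X]) : (f ^ p).coeff 1 = 0 := by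
  rw [← map_frobenius_expand, coeff_map, coeff_expand (Fact.out : p.Prime).pos,
    if_neg (Nat.Prime.not_dvd_one Fact.out), map_zero]

theorem exists_eq_sum_smul_of_isNoetherian {R W : Type*} [Semiring R] [AddCommMonoid W]
    [Module R W] [IsNoetherian R W] (v : ℕ → W) :
    ∃ (d : ℕ) (c : ℕ → R), v (d + 1) = ∑ j ∈ range (d + 1), c j • v j := by
  let S : ℕ →o Submodule R W :=
    ⟨fun i => Submodule.span R (v '' ↑(range i)), fun i j hij =>
      Submodule.span_mono (Set.image_mono (by simpa using hij))⟩
  obtain ⟨d, hd⟩ := monotone_stabilizes_iff_noetherian.mpr inferInstance S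
  have hmem : v (d + 1) ∈ S (d + 1) := by
    rw [← hd (d + 1) d.le_succ, hd (d + 2) (by omega)]
    exact Submodule.subset_span ⟨d + 1, by simp, rfl⟩
  obtain ⟨c, hc⟩ := (Submodule.mem_span_image_finset_iff_exists_fun' R).mp hmem
  exact ⟨d, c, hc.symm⟩

section Lang

variable {k : Type*} [Field k] {p : ℕ} [Fact p.Prime] [CharP k p] [IsAlgClosed k]

/- These are the coefficient conditions for `F (∑ aⱼ • vⱼ) - ∑ aⱼ • vⱼ = v₀` when `vⱼ₊₁ = F vⱼ`
and `v_{d+1} = ∑ cⱼ • vⱼ`. -/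
theorem exists_frobenius_recurrence_solution (d : ℕ) (c : ℕ → k) :
    ∃ a : ℕ → k, a 0 = c 0 * a d ^ p - 1 ∧
      ∀ j < d, a (j + 1) = a j ^ p + c (j + 1) * a d ^ p := by
  let q : ℕ → k[X] := fun j => Nat.rec (C (c 0) * X ^ p - 1)
    (fun j qj => qj ^ p + C (c (j + 1)) * X ^ p) j
  have hq : ∀ j, (q j).coeff 1 = 0 := by
    have hp1 : p ≠ 1 := (Fact.out : p.Prime).ne_one
    intro j
    induction j with
    | zero => simp [q, coeff_X_pow, coeff_one, hp1.symm]
    | succ j _ => simp [q, coeff_one_pow_char]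
  obtain ⟨t, ht⟩ : ∃ t, (q d - X).IsRoot t := by
    refine IsAlgClosed.exists_root _ fun h => ?_
    have := coeff_eq_zero_of_natDegree_lt (p := q d - X) (n := 1)
      (by rw [natDegree_eq_of_degree_eq_some h]; exact one_pos)
    simp [hq] at this
  have ht' : (q d).eval t = t := by simpa [sub_eq_zero] using ht
  refine ⟨fun j => (q j).eval t, ?_, fun j _ => ?_⟩ <;> simp [q, ht']

theorem exists_apply_sub_self_eq_of_frobenius {W : Type*} [AddCommGroup W] [Module k W]
    [Module.Finite k W] (F : W →ₛₗ[frobenius k p] W) (n : W) : ∃ u, F u - u = n := by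
  set v : ℕ → W := fun i => F^[i] n
  have hv0 : v 0 = n := rfl
  have hv : ∀ i, F (v i) = v (i + 1) := fun i => (Function.iterate_succ_apply' F i n).symm
  obtain ⟨d, c, hd⟩ := exists_eq_sum_smul_of_isNoetherian (R := k) v
  obtain ⟨a, ha0, ha⟩ := exists_frobenius_recurrence_solution d c
  have hsum : ∑ j ∈ range d, a (j + 1) • v (j + 1)
      = ∑ j ∈ range d, (a j ^ p + c (j + 1) * a d ^ p) • v (j + 1) :=
    sum_congr rfl fun j hj => by rw [ha j (mem_range.mp hj)]
  refine ⟨∑ j ∈ range (d + 1), a j • v j, sub_eq_iff_eq_add.mpr ?_⟩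
  calc F (∑ j ∈ range (d + 1), a j • v j)
      = ∑ j ∈ range d, a j ^ p • v (j + 1) + a d ^ p • v (d + 1) := by
        rw [map_sum, sum_range_succ]
        simp only [map_smulₛₗ, frobenius_def, hv]
    _ = ∑ j ∈ range d, (a j ^ p + c (j + 1) * a d ^ p) • v (j + 1)
          + (c 0 * a d ^ p) • v 0 := by
        rw [hd, sum_range_succ', smul_add, smul_sum]
        simp only [add_smul, sum_add_distrib, smul_smul, mul_comm (a d ^ p)]
        abel
    _ = n + ∑ j ∈ range (d + 1), a j • v j := by
        rw [sum_range_succ', hsum, ha0, sub_smul, one_smul, hv0]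
        abel

theorem surjective_frobenius_sub_linear {V W : Type*} [AddCommGroup V] [Module k V]
    [AddCommGroup W] [Module k W] [Module.Finite k W] (A : V →ₛₗ[frobenius k p] W)
    (B : V →ₗ[k] W) (hB : Function.Surjective B) : Function.Surjective fun v => A v - B v := by
  intro n
  obtain ⟨s, hs⟩ := B.exists_rightInverse_of_surjective (LinearMap.range_eq_top.mpr hB)
  obtain ⟨u, hu⟩ := exists_apply_sub_self_eq_of_frobenius (A.comp s) n
  refine ⟨s u, ?_⟩
  simpa [← LinearMap.comp_apply B s, hs] using hu

end Lang

section Reduction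

variable {R : Type*} [CommRing R] {p : ℕ} [Fact p.Prime] (I : Ideal R)
  {M N : Type*} [AddCommGroup M] [Module R M] [AddCommGroup N] [Module R N]

theorem Ideal.Quotient.charP_of_prime [CharP R p] [Nontrivial (R ⧸ I)] : CharP (R ⧸ I) p :=
  (CharP.charP_iff_prime_eq_zero Fact.out).mpr <| by
    rw [← map_natCast (Ideal.Quotient.mk I), CharP.cast_eq_zero, map_zero]

def AddMonoidHom.frobeniusReduction [CharP (R ⧸ I) p] (A : M →+ N)
    (hA : ∀ x ∈ (I • ⊤ : Submodule R M), A x ∈ (I • ⊤ : Submodule R N))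
    (hAsemi : ∀ (r : R) (x : M), A (r • x) - r ^ p • A x ∈ (I • ⊤ : Submodule R N)) :
    (M ⧸ (I • ⊤ : Submodule R M)) →ₛₗ[frobenius (R ⧸ I) p] (N ⧸ (I • ⊤ : Submodule R N)) where
  toFun := QuotientAddGroup.map _ _ A hA
  map_add' := map_add _
  map_smul' := by
    rintro ⟨r⟩ ⟨x⟩
    exact (Submodule.Quotient.eq _).mpr (hAsemi r x)

theorem IsLocalRing.exists_sub_sub_mem_maximalIdeal_smul_top [IsLocalRing R] [CharP R p]
    [IsAlgClosed (ResidueField R)] [Module.Finite R N] (A : M →+ N) (B : M →ₗ[R] N)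
    (hA : ∀ x ∈ (maximalIdeal R • ⊤ : Submodule R M), A x ∈ (maximalIdeal R • ⊤ : Submodule R N))
    (hAsemi : ∀ (r : R) (x : M), A (r • x) - r ^ p • A x ∈ (maximalIdeal R • ⊤ : Submodule R N))
    (hB : ∀ n : N, ∃ x : M, B x - n ∈ (maximalIdeal R • ⊤ : Submodule R N)) (n : N) :
    ∃ x : M, A x - B x - n ∈ (maximalIdeal R • ⊤ : Submodule R N) := by
  -- `ResidueField R` is `R ⧸ maximalIdeal R` carrying this field structure.
  let := Ideal.Quotient.field (maximalIdeal R)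
  have : IsAlgClosed (R ⧸ maximalIdeal R) := ‹IsAlgClosed (ResidueField R)›
  have := Ideal.Quotient.charP_of_prime (p := p) (maximalIdeal R)
  let B₀ := ((maximalIdeal R • ⊤ : Submodule R M).mapQ (maximalIdeal R • ⊤) B
    (Submodule.smul_top_le_comap_smul_top _ B)).extendScalarsOfSurjective
      (S := R ⧸ maximalIdeal R) Ideal.Quotient.mk_surjective
  have hB₀ : Function.Surjective B₀ := by
    rintro ⟨y⟩
    obtain ⟨x, hx⟩ := hB y
    exact ⟨Submodule.Quotient.mk x, (Submodule.Quotient.eq _).mpr hx⟩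
  obtain ⟨⟨x⟩, hx⟩ := surjective_frobenius_sub_linear
    (A.frobeniusReduction _ hA hAsemi) B₀ hB₀ (Submodule.Quotient.mk n)
  exact ⟨x, (Submodule.Quotient.eq _).mp hx⟩

end Reduction

theorem surjective_of_exists_sub_mem_pow_succ_smul_top {R : Type*} [CommRing R] (I : Ideal R)
    {M N : Type*} [AddCommGroup M] [Module R M] [AddCommGroup N] [Module R N]
    [IsPrecomplete I M] [IsHausdorff I N] (φ : M →+ N)
    (hφ : ∀ i, ∀ x ∈ (I ^ i • ⊤ : Submodule R M), φ x ∈ (I ^ i • ⊤ : Submodule R N))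
    (hgr : ∀ i, ∀ y ∈ (I ^ i • ⊤ : Submodule R N), ∃ x ∈ (I ^ i • ⊤ : Submodule R M),
      φ x - y ∈ (I ^ (i + 1) • ⊤ : Submodule R N)) :
    Function.Surjective φ := by
  intro y
  have step : ∀ i (s : M), ∃ x, φ s - y ∈ (I ^ i • ⊤ : Submodule R N) →
      x ∈ (I ^ i • ⊤ : Submodule R M) ∧ φ (s + x) - y ∈ (I ^ (i + 1) • ⊤ : Submodule R N) := by
    intro i s
    by_cases hs : φ s - y ∈ (I ^ i • ⊤ : Submodule R N)
    · obtain ⟨x, hx, hφx⟩ := hgr i (y - φ s) (by simpa using neg_mem hs)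
      exact ⟨x, fun _ => ⟨hx, by simpa [map_add, sub_sub_eq_add_sub, add_comm] using hφx⟩⟩
    · exact ⟨0, fun h => absurd h hs⟩
  choose dx hdx using step
  let s : ℕ → M := fun i => Nat.rec 0 (fun i si => si + dx i si) i
  have hs : ∀ i, φ (s i) - y ∈ (I ^ i • ⊤ : Submodule R N) := by
    intro i
    induction i with
    | zero => simp
    | succ i ih => exact (hdx i (s i) ih).2
  have hcauchy : ∀ i, s i ≡ s (i + 1) [SMOD (I ^ i • ⊤ : Submodule R M)] := fun i =>
    (SModEq.sub_mem.mpr (by simpa [s] using (hdx i (s i) (hs i)).1)).symm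
  obtain ⟨L, hL⟩ := IsPrecomplete.prec ‹_› (f := s)
    ((AdicCompletion.isAdicCauchy_iff I M s).mpr hcauchy)
  refine ⟨L, sub_eq_zero.mp (IsHausdorff.haus ‹_› _ fun i => SModEq.zero.mpr ?_)⟩
  simpa using add_mem (hφ i _ (SModEq.sub_mem.mp (hL i).symm)) (hs i)

theorem stmt8_general {p : ℕ} (hp : p.Prime) {R : Type*} [CommRing R] [IsLocalRing R]
    [CharP R p] [IsAlgClosed (ResidueField R)]
    {M N : Type*} [AddCommGroup M] [AddCommGroup N] [Module R M] [Module R N]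
    [Module.Finite R N]
    [IsAdicComplete (maximalIdeal R) M] [IsAdicComplete (maximalIdeal R) N]
    (A : M →+ N) (B : M →ₗ[R] N)
    -- `A` respects the filtrations, mapping `F_i M` into `F_{p·i} N`:
    (hAfilt : ∀ (i : ℕ), ∀ x ∈ (maximalIdeal R ^ i • ⊤ : Submodule R M),
      A x ∈ (maximalIdeal R ^ (p * i) • ⊤ : Submodule R N))
    -- `gr₀(A)` is Frobenius-semilinear over the residue field `k = R/m`:
    (hAsemi : ∀ (r : R) (x : M), A (r • x) - r ^ p • A x ∈ (maximalIdeal R • ⊤ : Submodule R N))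
    -- all graded pieces `grᵢ(B) : mⁱM/m^{i+1}M → mⁱN/m^{i+1}N` are surjective:
    (hBgr : ∀ (i : ℕ), ∀ n ∈ (maximalIdeal R ^ i • ⊤ : Submodule R N),
      ∃ x ∈ (maximalIdeal R ^ i • ⊤ : Submodule R M),
        B x - n ∈ (maximalIdeal R ^ (i + 1) • ⊤ : Submodule R N)) :
    Function.Surjective (fun x => A x - B x) := by
  have := Fact.mk hp
  have hA : ∀ i, ∀ x ∈ (maximalIdeal R ^ i • ⊤ : Submodule R M), ∀ j ≤ p * i,
      A x ∈ (maximalIdeal R ^ j • ⊤ : Submodule R N) := fun i x hx j hj =>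
    Submodule.pow_smul_top_le _ _ hj (hAfilt i x hx)
  refine surjective_of_exists_sub_mem_pow_succ_smul_top (maximalIdeal R) (A - B.toAddMonoidHom)
    (fun i x hx => sub_mem (hA i x hx i (Nat.le_mul_of_pos_left i hp.pos))
      (Submodule.smul_top_le_comap_smul_top _ B hx)) fun i y hy => ?_
  rcases i.eq_zero_or_pos with rfl | hi
  · obtain ⟨x, hx⟩ := IsLocalRing.exists_sub_sub_mem_maximalIdeal_smul_top A B
      (fun x hx => by simpa using hA 1 x (by simpa using hx) 1 (by simpa using hp.one_le)) hAsemi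
      (fun n => by simpa using hBgr 0 n (by simp)) y
    exact ⟨x, by simp, by simpa using hx⟩
  · obtain ⟨x, hx, hBx⟩ := hBgr i (-y) (neg_mem hy)
    refine ⟨x, hx, ?_⟩
    have := sub_mem (hA i x hx (i + 1) (by nlinarith [hp.two_le])) hBx
    simpa [sub_add_eq_sub_sub] using this

/-- Let `M`, `N` be finitely generated modules over a complete Noetherian local
ring `(R, m)` of characteristic `p` with algebraically closed residue field `k`, each with the
`m`-adic filtration `Fᵢ = mⁱ • ⊤`.  Let `φ = A - B` where `B` is `R`-linear with all graded
pieces `grᵢ(B)` surjective, and `A` is additive with `A (mⁱM) ⊆ m^{pi} N` (so `grᵢ(A) = 0` for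
`i > 0`) and `gr₀(A)` Frobenius-semilinear over `k`.  Then `φ` is surjective. -/
theorem stmt8 {p : ℕ} (hp : p.Prime) {R : Type*} [CommRing R] [IsLocalRing R]
    [IsNoetherianRing R] [CharP R p] [IsAlgClosed (ResidueField R)]
    [IsAdicComplete (maximalIdeal R) R]
    {M N : Type*} [AddCommGroup M] [AddCommGroup N] [Module R M] [Module R N]
    [Module.Finite R M] [Module.Finite R N]
    [IsAdicComplete (maximalIdeal R) M] [IsAdicComplete (maximalIdeal R) N]
    (A : M →+ N) (B : M →ₗ[R] N)
    -- `A` respects the filtrations, mapping `F_i M` into `F_{p·i} N`: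
    (hAfilt : ∀ (i : ℕ), ∀ x ∈ (maximalIdeal R ^ i • ⊤ : Submodule R M),
      A x ∈ (maximalIdeal R ^ (p * i) • ⊤ : Submodule R N))
    -- `gr₀(A)` is Frobenius-semilinear over the residue field `k = R/m`:
    (hAsemi : ∀ (r : R) (x : M), A (r • x) - r ^ p • A x ∈ (maximalIdeal R • ⊤ : Submodule R N))
    -- all graded pieces `grᵢ(B) : mⁱM/m^{i+1}M → mⁱN/m^{i+1}N` are surjective:
    (hBgr : ∀ (i : ℕ), ∀ n ∈ (maximalIdeal R ^ i • ⊤ : Submodule R N),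
      ∃ x ∈ (maximalIdeal R ^ i • ⊤ : Submodule R M),
        B x - n ∈ (maximalIdeal R ^ (i + 1) • ⊤ : Submodule R N)) :
    Function.Surjective (fun x => A x - B x) :=
  stmt8_general hp A B hAfilt hAsemi hBgr
end
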